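/- arXiv:math/0412451 — 8 statements merged into one kernel-verified Lean document; each statement's English description precedes it below -/
import Mathlib

section
/- Let A be a unital C*-algebra and ψ_1, …, ψ_n ∈ A elements such that every product ψ_l*·ψ_m lies in the centre of A and Σ_{l=1}^n ψ_l·ψ_l* = 1. Then the map σ : A → A defined by σ(a) := Σ_{l=1}^n ψ_l·a·ψ_l* is a unital *-homomorphism, and σ(a)·ψ_k = ψ_k·a for all a ∈ A and all k (so every finitely generated Hilbert bimodule over the centre contained in A induces an inner endomorphism). -/
/-!
Write `σ a = ∑ l, ψ l * a * ψ l⋆`. Since each `ψ l⋆ * ψ k` is central,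
`σ a * ψ k = ∑ l, ψ l * ψ l⋆ * ψ k * a = ψ k * a`. Multiplicativity is a consequence of this
intertwining relation: `σ a * σ b = ∑ m, σ a * ψ m * b * ψ m⋆ = ∑ m, ψ m * (a * b) * ψ m⋆`.
-/

open Finset

section InnerMap

variable {ι R : Type*} [Fintype ι] [Semiring R] [Star R]

def innerMap (ψ : ι → R) (a : R) : R :=
  ∑ l, ψ l * a * star (ψ l)

variable {ψ : ι → R}

theorem innerMap_one (hsum : ∑ l, ψ l * star (ψ l) = 1) : innerMap ψ 1 = 1 := by
  simpa only [innerMap, mul_one] using hsum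

theorem innerMap_mul_eq_mul (hcomm : ∀ l m a, Commute (star (ψ l) * ψ m) a)
    (hsum : ∑ l, ψ l * star (ψ l) = 1) (a : R) (k : ι) :
    innerMap ψ a * ψ k = ψ k * a := by
  have hterm (l : ι) : ψ l * a * star (ψ l) * ψ k = ψ l * star (ψ l) * (ψ k * a) := by
    simp only [mul_assoc, ← (hcomm l k a).eq]
  rw [innerMap, sum_mul, sum_congr rfl fun l _ => hterm l, ← sum_mul, hsum, one_mul]

theorem innerMap_mul (hcomm : ∀ l m a, Commute (star (ψ l) * ψ m) a)
    (hsum : ∑ l, ψ l * star (ψ l) = 1) (a b : R) :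
    innerMap ψ (a * b) = innerMap ψ a * innerMap ψ b := by
  calc innerMap ψ (a * b) = ∑ m, ψ m * a * b * star (ψ m) := by simp only [innerMap, mul_assoc]
    _ = ∑ m, innerMap ψ a * ψ m * b * star (ψ m) := by
      simp only [innerMap_mul_eq_mul hcomm hsum]
    _ = innerMap ψ a * innerMap ψ b := by simp only [innerMap.eq_1 ψ b, mul_sum, mul_assoc]

end InnerMap

def innerStarAlgHom {ι S R : Type*} [Fintype ι] [CommSemiring S] [Semiring R] [StarRing R]
    [Algebra S R] (ψ : ι → R) (hcomm : ∀ l m a, Commute (star (ψ l) * ψ m) a)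
    (hsum : ∑ l, ψ l * star (ψ l) = 1) : R →⋆ₐ[S] R where
  toFun := innerMap ψ
  map_one' := innerMap_one hsum
  map_mul' := innerMap_mul hcomm hsum
  map_zero' := by simp only [innerMap, mul_zero, zero_mul, sum_const_zero]
  map_add' a b := by simp only [innerMap, mul_add, add_mul, sum_add_distrib]
  commutes' s := by
    simp only [innerMap, Algebra.algebraMap_eq_smul_one, mul_smul_comm, smul_mul_assoc, mul_one,
      ← smul_sum, hsum]
  map_star' a := by simp only [innerMap, star_sum, star_mul, star_star, mul_assoc]

theorem inner_endomorphism_induced_by_bimodule_general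
    {A : Type*} [NormedRing A] [StarRing A]
    [NormedAlgebra ℂ A]
    (n : ℕ) (ψ : Fin n → A)
    (hcentral : ∀ (l m : Fin n) (a : A), (star (ψ l) * ψ m) * a = a * (star (ψ l) * ψ m))
    (hsum : ∑ l, ψ l * star (ψ l) = 1)
    (σ : A → A) (hσ : ∀ a : A, σ a = ∑ l, ψ l * a * star (ψ l)) :
    σ 1 = 1 ∧
    (∀ a b : A, σ (a * b) = σ a * σ b) ∧
    (∀ a b : A, σ (a + b) = σ a + σ b) ∧
    (∀ (c : ℂ) (a : A), σ (c • a) = c • σ a) ∧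
    (∀ a : A, σ (star a) = star (σ a)) ∧
    (∀ (a : A) (k : Fin n), σ a * ψ k = ψ k * a) := by
  let φ : A →⋆ₐ[ℂ] A := innerStarAlgHom ψ hcentral hsum
  obtain rfl : σ = φ := funext hσ
  exact ⟨map_one φ, map_mul φ, map_add φ, map_smul φ, map_star φ,
    innerMap_mul_eq_mul hcentral hsum⟩

/-- Let `A` be a unital C*-algebra and `ψ_1, …, ψ_n ∈ A` elements such
that every product `ψ_l*·ψ_m` lies in the centre of `A` and `Σ_l ψ_l·ψ_l* = 1`.  Then the
map `σ(a) := Σ_l ψ_l·a·ψ_l*` is a unital *-homomorphism, and `σ(a)·ψ_k = ψ_k·a` for all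
`a ∈ A` and all `k`: every finitely generated Hilbert bimodule over the centre contained
in `A` induces an inner endomorphism. -/
theorem inner_endomorphism_induced_by_bimodule
    {A : Type*} [NormedRing A] [StarRing A] [CStarRing A] [CompleteSpace A]
    [NormedAlgebra ℂ A] [StarModule ℂ A]
    (n : ℕ) (ψ : Fin n → A)
    (hcentral : ∀ (l m : Fin n) (a : A), (star (ψ l) * ψ m) * a = a * (star (ψ l) * ψ m))
    (hsum : ∑ l, ψ l * star (ψ l) = 1)
    (σ : A → A) (hσ : ∀ a : A, σ a = ∑ l, ψ l * a * star (ψ l)) :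
    σ 1 = 1 ∧
    (∀ a b : A, σ (a * b) = σ a * σ b) ∧
    (∀ a b : A, σ (a + b) = σ a + σ b) ∧
    (∀ (c : ℂ) (a : A), σ (c • a) = c • σ a) ∧
    (∀ a : A, σ (star a) = star (σ a)) ∧
    (∀ (a : A) (k : Fin n), σ a * ψ k = ψ k * a) :=
  inner_endomorphism_induced_by_bimodule_general n ψ hcentral hsum σ hσ
end

section
/- Let A be a unital C*-algebra, ρ : A → A a unital *-homomorphism, and p ↦ ε(p) a group homomorphism from ℙ_∞ into the unitary group of A such that ε(𝕊p) = ρ(ε(p)) for all p ∈ ℙ_∞ and such that ε := ε(1,1) satisfies ε·ρ²(a) = ρ²(a)·ε for all a ∈ A. Then ε(p) ∈ (ρ^n,ρ^n) for every n ∈ ℕ and every p ∈ ℙ_n, i.e. ε(p) commutes with ρ^n(a) for all a ∈ A. -/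
/-- The predicate defining the group `ℙ_∞`: a permutation of `ℕ` belongs to `ℙ_∞`
iff it moves only finitely many points. -/
def HasFiniteSupp (p : Equiv.Perm ℕ) : Prop := {x : ℕ | p x ≠ x}.Finite

/-- Auxiliary function for the shift. -/
def shiftFun (f : ℕ → ℕ) : ℕ → ℕ
  | 0 => 0
  | n + 1 => f n + 1

/-- The shift `𝕊` on permutations of `ℕ` (`0`-indexed): `(𝕊p)(0) = 0`,
`(𝕊p)(n+1) = p(n)+1`. -/
def shiftPerm (p : Equiv.Perm ℕ) : Equiv.Perm ℕ where
  toFun := shiftFun p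
  invFun := shiftFun p.symm
  left_inv := by intro n; cases n <;> simp [shiftFun]
  right_inv := by intro n; cases n <;> simp [shiftFun]

/-- Auxiliary function for the block permutation. -/
def blockFun (r s : ℕ) (n : ℕ) : ℕ :=
  if n < r then n + s else if n < r + s then n - r else n

/-- The block permutation `(r,s) ∈ ℙ_{r+s}` permuting the first `r` terms with the
remaining `s` (`0`-indexed: `i ↦ i+s` for `i < r`, `i ↦ i-r` for `r ≤ i < r+s`,
fixing all other points). -/
def blockPerm (r s : ℕ) : Equiv.Perm ℕ where
  toFun := blockFun r s
  invFun := blockFun s r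
  left_inv := by intro n; simp only [blockFun]; split_ifs <;> omega
  right_inv := by intro n; simp only [blockFun]; split_ifs <;> omega

/-- A weak permutation symmetry for the unital *-endomorphism `ρ` of `A`: a group
homomorphism `p ↦ ε(p)` from `ℙ_∞` into the unitary group of `A` such that
`ε(𝕊p) = ρ(ε(p))` for all `p ∈ ℙ_∞` and `ε(p) ∈ (ρ^n, ρ^n)` for all `p ∈ ℙ_n`
(where `ℙ_n` is the subgroup of permutations fixing every point out of the first `n`). -/
structure WeakPermSymm {A : Type*} [NormedRing A] [StarRing A] [CStarRing A]
    [CompleteSpace A] [NormedAlgebra ℂ A] [StarModule ℂ A]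
    (ρ : A →⋆ₐ[ℂ] A) (ε : Equiv.Perm ℕ → A) : Prop where
  map_one : ε 1 = 1
  map_mul : ∀ p q : Equiv.Perm ℕ, HasFiniteSupp p → HasFiniteSupp q →
    ε (p * q) = ε p * ε q
  mem_unitary : ∀ p : Equiv.Perm ℕ, HasFiniteSupp p → ε p ∈ unitary A
  shift : ∀ p : Equiv.Perm ℕ, HasFiniteSupp p → ε (shiftPerm p) = ρ (ε p)
  comm : ∀ (n : ℕ) (p : Equiv.Perm ℕ), (∀ m : ℕ, n ≤ m → p m = m) →
    ∀ a : A, ε p * (⇑ρ)^[n] a = (⇑ρ)^[n] a * ε p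

variable {A : Type*} [NormedRing A] [StarRing A] [CStarRing A] [CompleteSpace A]
  [NormedAlgebra ℂ A] [StarModule ℂ A]

/-- The intertwiner space `(ρ^r, ρ^s) := {t ∈ A : ρ^s(a)·t = t·ρ^r(a) ∀ a ∈ A}`. -/
def IsIntertwiner (ρ : A →⋆ₐ[ℂ] A) (r s : ℕ) (t : A) : Prop :=
  ∀ a : A, (⇑ρ)^[s] a * t = t * (⇑ρ)^[r] a

/-- The symmetry intertwiner space
`(ρ^r, ρ^s)_ε := {t ∈ (ρ^r, ρ^s) : ε(s,1)·t = ρ(t)·ε(r,1)}`. -/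
def IsSymIntertwiner (ρ : A →⋆ₐ[ℂ] A) (ε : Equiv.Perm ℕ → A) (r s : ℕ) (t : A) : Prop :=
  IsIntertwiner ρ r s t ∧ ε (blockPerm s 1) * t = ρ t * ε (blockPerm r 1)

open Equiv

/-! The group `ℙ_n` is generated by the adjacent transpositions `σ_j = (j, j+1)` with
`j + 2 ≤ n` (`0`-indexed). The shift property gives `ε(σ_j) = ρ^j(ε(σ_0))`, and since
`ρ^n(a) = ρ^j(ρ²(ρ^(n-j-2)(a)))`, the flip hypothesis makes `ε(σ_j)` commute with `ρ^n(a)`.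
Multiplicativity of `ε` propagates this to all of `ℙ_n`. -/

namespace HasFiniteSupp

theorem mul {p q : Perm ℕ} (hp : HasFiniteSupp p) (hq : HasFiniteSupp q) :
    HasFiniteSupp (p * q) :=
  (hp.union hq).subset fun x hx => by
    by_contra h
    simp_all [Set.mem_union, not_or]

theorem swap (i j : ℕ) : HasFiniteSupp (swap i j) :=
  ((Set.finite_singleton j).insert i).subset fun x hx => by
    by_contra h
    simp only [Set.mem_insert_iff, Set.mem_singleton_iff, not_or] at h
    exact hx (swap_apply_of_ne_of_ne h.1 h.2)

end HasFiniteSupp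

theorem blockPerm_one_one : blockPerm 1 1 = swap 0 1 := by
  ext n
  simp only [blockPerm, blockFun, coe_fn_mk, swap_apply_def]
  split_ifs <;> omega

theorem shiftPerm_swap_succ (j : ℕ) : shiftPerm (swap j (j + 1)) = swap (j + 1) (j + 2) := by
  ext (_ | m) <;> simp only [shiftPerm, coe_fn_mk, shiftFun, swap_apply_def] <;> split_ifs <;> omega

theorem mem_closure_swap_succ_of_forall_le_apply_eq {n : ℕ} {p : Perm ℕ}
    (hp : ∀ m, n ≤ m → p m = m) :
    p ∈ Submonoid.closure {σ | ∃ j, j + 2 ≤ n ∧ σ = swap j (j + 1)} := by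
  rcases n with _ | n
  · obtain rfl : p = 1 := Equiv.ext fun m => hp m m.zero_le
    exact one_mem _
  -- `p` restricts to `{m // m < n + 1} ≃ Fin (n + 1)`, whose symmetric group is generated by
  -- adjacent transpositions.
  let φ : Perm (Fin (n + 1)) →* Perm ℕ :=
    Perm.ofSubtype.comp Fin.equivSubtype.permCongrHom.toMonoidHom
  have hstable : ∀ m, p m < n + 1 ↔ m < n + 1 := fun m => by
    refine ⟨fun h => ?_, fun h => ?_⟩
    · by_contra! h'
      rw [hp m h'] at h; omega
    · by_contra! h'
      have := p.injective (hp _ h')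
      omega
  have hφ : φ (Fin.equivSubtype.permCongrHom.symm (p.subtypePerm hstable)) = p := by
    simp only [φ, MonoidHom.coe_comp, Function.comp_apply, MulEquiv.coe_toMonoidHom,
      MulEquiv.apply_symm_apply]
    exact Perm.ofSubtype_subtypePerm _ fun m hm => by_contra fun h => hm (hp m (by omega))
  have hgen : φ '' Set.range (fun i : Fin n => swap i.castSucc i.succ) ⊆
      {σ | ∃ j, j + 2 ≤ n + 1 ∧ σ = swap j (j + 1)} := by
    rintro _ ⟨_, ⟨i, rfl⟩, rfl⟩
    refine ⟨i, by omega, ?_⟩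
    simp only [φ, MonoidHom.coe_comp, Function.comp_apply, MulEquiv.coe_toMonoidHom,
      permCongrHom_coe, permCongr_def, symm_trans_swap_trans, Perm.ofSubtype_swap_eq]
    rfl
  rw [← hφ]
  refine Submonoid.closure_mono hgen ?_
  rw [← MonoidHom.map_mclosure, Perm.mclosure_swap_castSucc_succ]
  exact Submonoid.mem_map_of_mem _ (Submonoid.mem_top _)

theorem Commute.iterate_map {M F : Type*} [Mul M] [FunLike F M M] [MulHomClass F M M]
    {a b : M} (h : Commute a b) (f : F) (j : ℕ) : Commute ((⇑f)^[j] a) ((⇑f)^[j] b) := by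
  induction j with
  | zero => exact h
  | succ j ih => simpa only [Function.iterate_succ_apply'] using ih.map f

theorem commute_of_mem_closure {M : Type*} [Monoid M] {ε : Perm ℕ → M} (hone : ε 1 = 1)
    (hmul : ∀ p q, HasFiniteSupp p → HasFiniteSupp q → ε (p * q) = ε p * ε q)
    {S : Set (Perm ℕ)} {x : M} (hS : ∀ s ∈ S, HasFiniteSupp s ∧ Commute (ε s) x)
    {p : Perm ℕ} (hp : p ∈ Submonoid.closure S) : HasFiniteSupp p ∧ Commute (ε p) x := by
  induction hp using Submonoid.closure_induction with
  | mem s hs => exact hS s hs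
  | one => exact ⟨by simp [HasFiniteSupp], hone ▸ Commute.one_left x⟩
  | mul p q _ _ hp hq => exact ⟨hp.1.mul hq.1, hmul p q hp.1 hq.1 ▸ hp.2.mul_left hq.2⟩

theorem apply_swap_succ_eq_iterate {M : Type*} {ε : Perm ℕ → M} {ρ : M → M}
    (hshift : ∀ p, HasFiniteSupp p → ε (shiftPerm p) = ρ (ε p)) (j : ℕ) :
    ε (swap j (j + 1)) = ρ^[j] (ε (swap 0 1)) := by
  induction j with
  | zero => rfl
  | succ j ih =>
    rw [← shiftPerm_swap_succ, hshift _ (.swap _ _), ih, Function.iterate_succ_apply']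

theorem commute_apply_swap_succ_iterate {M F : Type*} [Mul M] [FunLike F M M] [MulHomClass F M M]
    {ε : Perm ℕ → M} {ρ : F}
    (hshift : ∀ p, HasFiniteSupp p → ε (shiftPerm p) = ρ (ε p))
    (hflip : ∀ a, Commute (ε (swap 0 1)) (ρ (ρ a))) {j n : ℕ} (hjn : j + 2 ≤ n) (a : M) :
    Commute (ε (swap j (j + 1))) ((⇑ρ)^[n] a) := by
  obtain ⟨m, rfl⟩ := Nat.exists_eq_add_of_le' hjn
  rw [apply_swap_succ_eq_iterate hshift, add_comm, Function.iterate_add_apply]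
  exact (hflip _).iterate_map ρ j

theorem weak_perm_symmetry_of_flip_general
    (ρ : A →⋆ₐ[ℂ] A) (ε : Equiv.Perm ℕ → A)
    (hone : ε 1 = 1)
    (hmul : ∀ p q : Equiv.Perm ℕ, HasFiniteSupp p → HasFiniteSupp q →
      ε (p * q) = ε p * ε q)
    (hshift : ∀ p : Equiv.Perm ℕ, HasFiniteSupp p → ε (shiftPerm p) = ρ (ε p))
    (hflip : ∀ a : A, ε (blockPerm 1 1) * ρ (ρ a) = ρ (ρ a) * ε (blockPerm 1 1)) :
    ∀ (n : ℕ) (p : Equiv.Perm ℕ), (∀ m : ℕ, n ≤ m → p m = m) →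
      ∀ a : A, ε p * (⇑ρ)^[n] a = (⇑ρ)^[n] a * ε p := by
  intro n p hp a
  rw [blockPerm_one_one] at hflip
  refine (commute_of_mem_closure hone hmul ?_ (mem_closure_swap_succ_of_forall_le_apply_eq hp)).2
  rintro _ ⟨j, hjn, rfl⟩
  exact ⟨.swap _ _, commute_apply_swap_succ_iterate hshift hflip hjn a⟩

/-- Let `A` be a unital C*-algebra, `ρ : A → A` a unital
*-homomorphism, and `p ↦ ε(p)` a group homomorphism from `ℙ_∞` into the unitary group
of `A` such that `ε(𝕊p) = ρ(ε(p))` for all `p ∈ ℙ_∞` and such that `ε := ε(1,1)`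
satisfies `ε·ρ²(a) = ρ²(a)·ε` for all `a ∈ A`.  Then `ε(p) ∈ (ρ^n, ρ^n)` for every
`n ∈ ℕ` and every `p ∈ ℙ_n`, i.e. `ε(p)` commutes with `ρ^n(a)` for all `a ∈ A`. -/
theorem weak_perm_symmetry_of_flip
    (ρ : A →⋆ₐ[ℂ] A) (ε : Equiv.Perm ℕ → A)
    (hone : ε 1 = 1)
    (hmul : ∀ p q : Equiv.Perm ℕ, HasFiniteSupp p → HasFiniteSupp q →
      ε (p * q) = ε p * ε q)
    (hunitary : ∀ p : Equiv.Perm ℕ, HasFiniteSupp p → ε p ∈ unitary A)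
    (hshift : ∀ p : Equiv.Perm ℕ, HasFiniteSupp p → ε (shiftPerm p) = ρ (ε p))
    (hflip : ∀ a : A, ε (blockPerm 1 1) * ρ (ρ a) = ρ (ρ a) * ε (blockPerm 1 1)) :
    ∀ (n : ℕ) (p : Equiv.Perm ℕ), (∀ m : ℕ, n ≤ m → p m = m) →
      ∀ a : A, ε p * (⇑ρ)^[n] a = (⇑ρ)^[n] a * ε p :=
  weak_perm_symmetry_of_flip_general ρ ε hone hmul hshift hflip
end

section
/- Let ρ be a unital *-endomorphism of a unital C*-algebra A with a weak permutation symmetry ε. Then for all r, s, k ∈ ℕ the inclusion (ρ^r,ρ^s)_ε ⊆ (ρ^{r+k},ρ^{s+k})_ε holds; in particular every t ∈ (ρ^r,ρ^s)_ε satisfies ε(s+k,1)·t = ρ(t)·ε(r+k,1). -/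
variable {A : Type*} [NormedRing A] [StarRing A] [CStarRing A] [CompleteSpace A]
  [NormedAlgebra ℂ A] [StarModule ℂ A]

/-!
Since `(n+1,1) = (n,1) · 𝕊ⁿ(1,1)`, the symmetry gives `ε(n+1,1) = ε(n,1) · ρⁿ(ε(1,1))`. For
`t ∈ (ρ^r,ρ^s)`, the factor `ρˢ(ε(1,1))` can be moved past `t`, where it becomes `ρʳ(ε(1,1))`;
hence `(ρ^r,ρ^s)_ε ⊆ (ρ^{r+1},ρ^{s+1})_ε`, and the theorem follows by induction on `k`.
-/

lemma hasFiniteSupp_blockPerm (r s : ℕ) : HasFiniteSupp (blockPerm r s) := by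
  refine (Set.finite_Iio (r + s)).subset fun x hx => ?_
  by_contra hlt
  rw [Set.mem_Iio, not_lt] at hlt
  exact hx (show blockFun r s x = x by simp only [blockFun]; split_ifs <;> omega)

lemma shiftPerm_iterate_apply (p : Equiv.Perm ℕ) (n m : ℕ) :
    (shiftPerm^[n] p) m = if m < n then m else p (m - n) + n := by
  induction n generalizing m with
  | zero => simp
  | succ n ih =>
    rw [Function.iterate_succ_apply']
    cases m with
    | zero => simp [shiftPerm, shiftFun]
    | succ m =>
      change (shiftPerm^[n] p) m + 1 = _
      rw [ih m, show m + 1 - (n + 1) = m - n by omega]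
      split_ifs <;> omega

lemma HasFiniteSupp.shiftPerm_iterate {p : Equiv.Perm ℕ} (hp : HasFiniteSupp p) (n : ℕ) :
    HasFiniteSupp (shiftPerm^[n] p) := by
  refine (hp.image (· + n)).subset fun m hm => ?_
  have hm : (shiftPerm^[n] p) m ≠ m := hm
  rw [shiftPerm_iterate_apply] at hm
  split_ifs at hm with hlt
  · exact absurd rfl hm
  · exact ⟨m - n, fun h => hm (by omega), by simp only; omega⟩

lemma blockPerm_succ_one (n : ℕ) :
    blockPerm (n + 1) 1 = blockPerm n 1 * shiftPerm^[n] (blockPerm 1 1) := by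
  ext m
  rw [Equiv.Perm.mul_apply, shiftPerm_iterate_apply]
  change blockFun (n + 1) 1 m = blockFun n 1 (if m < n then m else blockFun 1 1 (m - n) + n)
  simp only [blockFun]
  split_ifs <;> omega

lemma IsIntertwiner.add_add {B : Type*} [NormedRing B] [StarRing B] [NormedAlgebra ℂ B]
    {ρ : B →⋆ₐ[ℂ] B} {r s : ℕ} {t : B} (h : IsIntertwiner ρ r s t) (k : ℕ) :
    IsIntertwiner ρ (r + k) (s + k) t := by
  intro a
  rw [Function.iterate_add_apply, Function.iterate_add_apply]
  exact h _

namespace WeakPermSymm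

variable {ρ : A →⋆ₐ[ℂ] A} {ε : Equiv.Perm ℕ → A}

lemma map_shiftPerm_iterate (hws : WeakPermSymm ρ ε) {p : Equiv.Perm ℕ} (hp : HasFiniteSupp p)
    (n : ℕ) : ε (shiftPerm^[n] p) = (⇑ρ)^[n] (ε p) := by
  induction n with
  | zero => rfl
  | succ n ih =>
    rw [Function.iterate_succ_apply', Function.iterate_succ_apply',
      hws.shift _ (hp.shiftPerm_iterate n), ih]

lemma map_blockPerm_succ_one (hws : WeakPermSymm ρ ε) (n : ℕ) :
    ε (blockPerm (n + 1) 1) = ε (blockPerm n 1) * (⇑ρ)^[n] (ε (blockPerm 1 1)) := by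
  rw [blockPerm_succ_one, hws.map_mul _ _ (hasFiniteSupp_blockPerm n 1)
    ((hasFiniteSupp_blockPerm 1 1).shiftPerm_iterate n),
    hws.map_shiftPerm_iterate (hasFiniteSupp_blockPerm 1 1)]

end WeakPermSymm

lemma IsSymIntertwiner.succ_succ {ρ : A →⋆ₐ[ℂ] A} {ε : Equiv.Perm ℕ → A}
    (hws : WeakPermSymm ρ ε) {r s : ℕ} {t : A} (h : IsSymIntertwiner ρ ε r s t) :
    IsSymIntertwiner ρ ε (r + 1) (s + 1) t := by
  refine ⟨h.1.add_add 1, ?_⟩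
  calc ε (blockPerm (s + 1) 1) * t
      = ε (blockPerm s 1) * ((⇑ρ)^[s] (ε (blockPerm 1 1)) * t) := by
        rw [hws.map_blockPerm_succ_one, mul_assoc]
    _ = ε (blockPerm s 1) * t * (⇑ρ)^[r] (ε (blockPerm 1 1)) := by rw [h.1, mul_assoc]
    _ = ρ t * ε (blockPerm (r + 1) 1) := by rw [h.2, mul_assoc, ← hws.map_blockPerm_succ_one]

/-- Let `ρ` be a unital *-endomorphism of a unital C*-algebra `A` with
a weak permutation symmetry `ε`.  Then for all `r, s, k ∈ ℕ` the inclusion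
`(ρ^r, ρ^s)_ε ⊆ (ρ^{r+k}, ρ^{s+k})_ε` holds; in particular every `t ∈ (ρ^r, ρ^s)_ε`
satisfies `ε(s+k,1)·t = ρ(t)·ε(r+k,1)`. -/
theorem symIntertwiner_mono
    (ρ : A →⋆ₐ[ℂ] A) (ε : Equiv.Perm ℕ → A) (hws : WeakPermSymm ρ ε)
    (r s k : ℕ) (t : A) (ht : IsSymIntertwiner ρ ε r s t) :
    IsSymIntertwiner ρ ε (r + k) (s + k) t ∧
      ε (blockPerm (s + k) 1) * t = ρ t * ε (blockPerm (r + k) 1) := by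
  have h : IsSymIntertwiner ρ ε (r + k) (s + k) t := by
    induction k with
    | zero => exact ht
    | succ k ih => exact ih.succ_succ hws
  exact ⟨h, h.2⟩
end

section
/- Let ρ be a unital *-endomorphism of a unital C*-algebra A with a weak permutation symmetry ε. Then for every r ∈ ℕ the unitary ε(r,1) belongs to (ρ^{r+1},ρ^{r+1})_ε, i.e. ε(r,1) commutes with ρ^{r+1}(a) for all a ∈ A and satisfies ε(r+1,1)·ε(r,1) = ρ(ε(r,1))·ε(r+1,1). -/
variable {A : Type*} [NormedRing A] [StarRing A] [CStarRing A] [CompleteSpace A]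
  [NormedAlgebra ℂ A] [StarModule ℂ A]

lemma HasFiniteSupp.of_forall_le_apply_eq {p : Equiv.Perm ℕ} {n : ℕ}
    (h : ∀ m, n ≤ m → p m = m) : HasFiniteSupp p :=
  (Set.finite_Iio n).subset fun m hm => by
    by_contra hnm
    exact hm (h m (not_lt.mp hnm))

lemma HasFiniteSupp.shiftPerm {p : Equiv.Perm ℕ} (hp : HasFiniteSupp p) :
    HasFiniteSupp (shiftPerm p) := by
  refine (hp.image Nat.succ).subset fun m hm => ?_
  cases m with
  | zero => exact absurd rfl hm
  | succ n => exact ⟨n, fun hn => hm (congrArg Nat.succ hn), rfl⟩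

lemma blockPerm_apply_of_le {r s m : ℕ} (hm : r + s ≤ m) : blockPerm r s m = m := by
  change blockFun r s m = m
  simp only [blockFun]
  split_ifs <;> omega

lemma shiftFun_apply (f : ℕ → ℕ) (n : ℕ) :
    shiftFun f n = if n = 0 then 0 else f (n - 1) + 1 := by
  cases n <;> simp [shiftFun]

lemma blockPerm_succ_mul_blockPerm (r : ℕ) :
    blockPerm (r + 1) 1 * blockPerm r 1 = shiftPerm (blockPerm r 1) * blockPerm (r + 1) 1 := by
  ext n
  simp only [Equiv.Perm.coe_mul, Function.comp_apply, shiftPerm, blockPerm, Equiv.coe_fn_mk,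
    shiftFun_apply, blockFun]
  split_ifs <;> omega

/-- Let `ρ` be a unital *-endomorphism of a unital C*-algebra `A` with
a weak permutation symmetry `ε`.  Then for every `r ∈ ℕ` the unitary `ε(r,1)` belongs
to `(ρ^{r+1}, ρ^{r+1})_ε`, i.e. `ε(r,1)` commutes with `ρ^{r+1}(a)` for every `a ∈ A`
and satisfies `ε(r+1,1)·ε(r,1) = ρ(ε(r,1))·ε(r+1,1)`. -/
theorem symIntertwiner_block
    (ρ : A →⋆ₐ[ℂ] A) (ε : Equiv.Perm ℕ → A) (hws : WeakPermSymm ρ ε) (r : ℕ) :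
    (∀ a : A, ε (blockPerm r 1) * (⇑ρ)^[r + 1] a = (⇑ρ)^[r + 1] a * ε (blockPerm r 1)) ∧
      ε (blockPerm (r + 1) 1) * ε (blockPerm r 1)
        = ρ (ε (blockPerm r 1)) * ε (blockPerm (r + 1) 1) := by
  have hfin := hasFiniteSupp_blockPerm
  refine ⟨hws.comm (r + 1) _ fun _ => blockPerm_apply_of_le, ?_⟩
  calc ε (blockPerm (r + 1) 1) * ε (blockPerm r 1)
      = ε (blockPerm (r + 1) 1 * blockPerm r 1) := (hws.map_mul _ _ (hfin _ _) (hfin _ _)).symm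
    _ = ε (shiftPerm (blockPerm r 1) * blockPerm (r + 1) 1) := by
      rw [blockPerm_succ_mul_blockPerm]
    _ = ρ (ε (blockPerm r 1)) * ε (blockPerm (r + 1) 1) := by
      rw [hws.map_mul _ _ (hfin r 1).shiftPerm (hfin _ _), hws.shift _ (hfin r 1)]
end

section
/- Let ρ be a unital *-endomorphism of a unital C*-algebra A with a weak permutation symmetry ε, let d ≥ 2, set P := P_{ε,d} and C := C(X^ρ), and let R_1,…,R_m ∈ A and S_1,…,S_n ∈ A satisfy: R_i·a = ρ^d(a)·R_i and S_j·a = ρ^d(a)·S_j for all a ∈ A; Σ_i R_i·R_i* = Σ_j S_j·S_j* = P; P·R_i = R_i and P·S_j = S_j for all i,j; Σ_i R_i*·R_i = 1; R_i*·ρ(R_k) = (−1)^{d−1}·d^{−1}·R_i*·R_k and S_j*·ρ(S_l) = (−1)^{d−1}·d^{−1}·S_j*·S_l for all indices; and for all i,k there exists f_{ik} ∈ C with R_k·R_i* = f_{ik}·P. Then every z_{ij} := R_i*·S_j belongs to C, and S_j = Σ_i R_i·z_{ij}, R_i = Σ_j S_j·z_{ij}* ; consequently the closed right C-submodules of A generated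 by {R_i} and by {S_j} coincide (the Hilbert bimodule implementing the special conjugate property is unique). -/
variable {A : Type*} [NormedRing A] [StarRing A] [CStarRing A] [CompleteSpace A]
  [NormedAlgebra ℂ A] [StarModule ℂ A]

/-- The embedding of the permutation group of `d` objects into `Equiv.Perm ℕ`; its
range is exactly the subgroup `ℙ_d` of finitely supported permutations of `ℕ` fixing
every point out of the first `d`. -/
def permOfFin (d : ℕ) (q : Equiv.Perm (Fin d)) : Equiv.Perm ℕ :=
  q.extendDomain Fin.equivSubtype

/-- The totally antisymmetric element
`P_{ε,d} := (d!)⁻¹ · Σ_{p ∈ ℙ_d} sign(p)·ε(p)`. -/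
noncomputable def Peps (ε : Equiv.Perm ℕ → A) (d : ℕ) : A :=
  ((d.factorial : ℂ))⁻¹ •
    ∑ q : Equiv.Perm (Fin d), ((Equiv.Perm.sign q : ℤ) : ℂ) • ε (permOfFin d q)

/-- The set `C(X^ρ)` of central `ρ`-invariant elements of `A`:
`C(X^ρ) := {f ∈ A : f·a = a·f ∀ a ∈ A, ρ(f) = f}`. -/
def IsCentralFixed (ρ : A →⋆ₐ[ℂ] A) (f : A) : Prop :=
  (∀ a : A, f * a = a * f) ∧ ρ f = f

/-!
Let `P = Σ_i R_i R_i* = Σ_j S_j S_j*` and `z_ij = R_i* S_j`. Both `R_i` and `S_j` intertwine the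
identity with `ρ^d`, so `z_ij` commutes with everything, and `P S_j = S_j`, `P R_i = R_i` expand
to the two reconstruction formulas. For `ρ`-invariance, the conjugate equations give
`P ρ(S_j) = c S_j` with `c = (-1)^(d-1)/d`; as `P` is self-adjoint, `R_k* P = R_k*`, hence
`R_k* ρ(S_j) = c z_kj`. Together with `R_k z_ij = f_ik S_j` and `Σ_k R_k* ρ(R_k) = c` this gives
`c ρ(z_ij) = c Σ_k f_ik z_kj = c z_ij`.
-/

open Finset

section SpecialConjugate

variable {𝕜 B ι κ : Type*} [Field 𝕜] [Ring B] [StarRing B] [Algebra 𝕜 B]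
  [Fintype ι] [Fintype κ]

lemma mul_star_eq_star_mul_iterate (ρ : B →⋆ₐ[𝕜] B) {d : ℕ} {x : B}
    (hx : ∀ a, x * a = (⇑ρ)^[d] a * x) (a : B) :
    a * star x = star x * (⇑ρ)^[d] a := by
  have hstar : Function.Commute star (⇑ρ)^[d] :=
    Function.Commute.iterate_right (fun y => (map_star ρ y).symm) d
  simpa [hstar.eq] using congrArg star (hx (star a))

lemma star_mul_mul_comm_of_intertwines (ρ : B →⋆ₐ[𝕜] B) {d : ℕ} {x y : B}
    (hx : ∀ a, x * a = (⇑ρ)^[d] a * x) (hy : ∀ a, y * a = (⇑ρ)^[d] a * y) (a : B) :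
    star x * y * a = a * (star x * y) := by
  rw [mul_assoc, hy, ← mul_assoc, ← mul_star_eq_star_mul_iterate ρ hx, mul_assoc]

lemma eq_sum_mul_star_mul {R : ι → B} {x : B} (hx : (∑ i, R i * star (R i)) * x = x) :
    x = ∑ i, R i * (star (R i) * x) := by
  simpa only [sum_mul, mul_assoc] using hx.symm

lemma star_mul_sum_mul_star_eq {R : ι → B} {x : B} (hx : (∑ i, R i * star (R i)) * x = x) :
    star x * ∑ i, R i * star (R i) = star x := by
  have hP : IsSelfAdjoint (∑ i, R i * star (R i)) :=
    isSelfAdjoint_sum _ fun i _ => IsSelfAdjoint.mul_star_self (R i)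
  simpa only [star_mul, hP.star_eq] using congrArg star hx

lemma mul_map_eq_smul_mul (ρ : B →⋆ₐ[𝕜] B) {c : 𝕜} {S : κ → B} {j : κ} {y : B}
    (hS : ∀ l, star (S l) * ρ (S j) = c • (star (S l) * S j))
    (hPS : (∑ l, S l * star (S l)) * S j = S j) (hy : y * ∑ l, S l * star (S l) = y) :
    y * ρ (S j) = c • (y * S j) := by
  calc y * ρ (S j) = y * ((∑ l, S l * star (S l)) * ρ (S j)) := by rw [← mul_assoc, hy]
    _ = y * ∑ l, c • (S l * (star (S l) * S j)) := by
      simp only [sum_mul, mul_assoc, hS, mul_smul_comm]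
    _ = c • (y * S j) := by rw [← smul_sum, ← eq_sum_mul_star_mul hPS, mul_smul_comm]

lemma eq_sum_mul_star_mul_of_mul_eq {R : ι → B} {f : ι → B} {x z : B}
    (hR : ∑ k, star (R k) * R k = 1) (hf : ∀ k a, f k * a = a * f k)
    (hz : ∀ k, R k * z = f k * x) :
    z = ∑ k, f k * (star (R k) * x) := by
  calc z = ∑ k, star (R k) * (R k * z) := by simp only [← mul_assoc, ← sum_mul, hR, one_mul]
    _ = ∑ k, f k * (star (R k) * x) := by
      simp only [hz, ← mul_assoc, hf]

lemma map_eq_self_of_mul_eq_mul (ρ : B →⋆ₐ[𝕜] B) {c : 𝕜} (hc : c ≠ 0) {R : ι → B}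
    {f : ι → B} {x z : B} (hR : ∑ k, star (R k) * R k = 1)
    (hRρ : ∀ k, star (R k) * ρ (R k) = c • (star (R k) * R k))
    (hf : ∀ k a, f k * a = a * f k) (hfρ : ∀ k, ρ (f k) = f k)
    (hz : ∀ k, R k * z = f k * x) (hx : ∀ k, star (R k) * ρ x = c • (star (R k) * x)) :
    ρ z = z := by
  have hz_sum := eq_sum_mul_star_mul_of_mul_eq hR hf hz
  refine smul_right_injective B hc ?_
  calc c • ρ z = (∑ k, star (R k) * ρ (R k)) * ρ z := by
        simp only [hRρ, ← smul_sum, hR, smul_mul_assoc, one_mul]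
    _ = ∑ k, f k * (star (R k) * ρ x) := by
        refine sum_mul .. |>.trans (sum_congr rfl fun k _ => ?_)
        rw [mul_assoc, ← map_mul, hz, map_mul, hfρ, ← mul_assoc, ← hf k, mul_assoc]
    _ = c • z := by simp only [hx, mul_smul_comm, ← smul_sum, ← hz_sum]

end SpecialConjugate

theorem special_conjugate_bimodule_unique_general
    (ρ : A →⋆ₐ[ℂ] A) (ε : Equiv.Perm ℕ → A)
    (d : ℕ) (hd : 2 ≤ d) (m n : ℕ) (R : Fin m → A) (S : Fin n → A)
    (hR0 : ∀ (i : Fin m) (a : A), R i * a = (⇑ρ)^[d] a * R i)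
    (hS0 : ∀ (j : Fin n) (a : A), S j * a = (⇑ρ)^[d] a * S j)
    (hRP : ∑ i, R i * star (R i) = Peps ε d)
    (hSP : ∑ j, S j * star (S j) = Peps ε d)
    (hPR : ∀ i : Fin m, Peps ε d * R i = R i)
    (hPS : ∀ j : Fin n, Peps ε d * S j = S j)
    (hRnorm : ∑ i, star (R i) * R i = 1)
    (hRconj : ∀ i k : Fin m,
      star (R i) * ρ (R k) = ((-1 : ℂ) ^ (d - 1) * (d : ℂ)⁻¹) • (star (R i) * R k))
    (hSconj : ∀ j l : Fin n,
      star (S j) * ρ (S l) = ((-1 : ℂ) ^ (d - 1) * (d : ℂ)⁻¹) • (star (S j) * S l))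
    (hf : ∀ i k : Fin m, ∃ f : A, IsCentralFixed ρ f ∧
      R k * star (R i) = f * Peps ε d) :
    (∀ (i : Fin m) (j : Fin n), IsCentralFixed ρ (star (R i) * S j)) ∧
    (∀ j : Fin n, S j = ∑ i, R i * (star (R i) * S j)) ∧
    (∀ i : Fin m, R i = ∑ j, S j * star (star (R i) * S j)) := by
  have hc : (-1 : ℂ) ^ (d - 1) * (d : ℂ)⁻¹ ≠ 0 :=
    mul_ne_zero (pow_ne_zero _ (by norm_num)) (inv_ne_zero (Nat.cast_ne_zero.mpr (by omega)))
  rw [← hSP] at hRP hPR hPS hf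
  refine ⟨fun i j => ⟨star_mul_mul_comm_of_intertwines ρ (hR0 i) (hS0 j), ?_⟩,
    fun j => eq_sum_mul_star_mul (by rw [hRP]; exact hPS j), fun i => ?_⟩
  · choose f hfC hfP using hf i
    refine map_eq_self_of_mul_eq_mul ρ hc (x := S j) hRnorm (fun k => hRconj k k)
      (fun k => (hfC k).1) (fun k => (hfC k).2) (fun k => ?_) (fun k => ?_)
    · rw [← mul_assoc, hfP, mul_assoc, hPS]
    · exact mul_map_eq_smul_mul ρ (hSconj · j) (hPS j) (star_mul_sum_mul_star_eq (hPR k))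
  · simpa only [star_mul, star_star] using eq_sum_mul_star_mul (hPR i)

/-- (Uniqueness of the Hilbert bimodule implementing the special
conjugate property.)  Let `ρ` be a unital *-endomorphism of a unital C*-algebra `A`
with a weak permutation symmetry `ε`, let `d ≥ 2`, set `P := P_{ε,d}` and
`C := C(X^ρ)`, and let `R_1, …, R_m` and `S_1, …, S_n` be sets of generators of Hilbert
bimodules implementing the special conjugate property (see the hypotheses below).
Then every `z_{ij} := R_i*·S_j` belongs to `C`, and `S_j = Σ_i R_i·z_{ij}`,
`R_i = Σ_j S_j·z_{ij}*`; consequently the closed right `C`-submodules of `A` generated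
by `{R_i}` and by `{S_j}` coincide. -/
theorem special_conjugate_bimodule_unique
    (ρ : A →⋆ₐ[ℂ] A) (ε : Equiv.Perm ℕ → A) (hws : WeakPermSymm ρ ε)
    (d : ℕ) (hd : 2 ≤ d) (m n : ℕ) (R : Fin m → A) (S : Fin n → A)
    (hR0 : ∀ (i : Fin m) (a : A), R i * a = (⇑ρ)^[d] a * R i)
    (hS0 : ∀ (j : Fin n) (a : A), S j * a = (⇑ρ)^[d] a * S j)
    (hRP : ∑ i, R i * star (R i) = Peps ε d)
    (hSP : ∑ j, S j * star (S j) = Peps ε d)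
    (hPR : ∀ i : Fin m, Peps ε d * R i = R i)
    (hPS : ∀ j : Fin n, Peps ε d * S j = S j)
    (hRnorm : ∑ i, star (R i) * R i = 1)
    (hRconj : ∀ i k : Fin m,
      star (R i) * ρ (R k) = ((-1 : ℂ) ^ (d - 1) * (d : ℂ)⁻¹) • (star (R i) * R k))
    (hSconj : ∀ j l : Fin n,
      star (S j) * ρ (S l) = ((-1 : ℂ) ^ (d - 1) * (d : ℂ)⁻¹) • (star (S j) * S l))
    (hf : ∀ i k : Fin m, ∃ f : A, IsCentralFixed ρ f ∧
      R k * star (R i) = f * Peps ε d) :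
    (∀ (i : Fin m) (j : Fin n), IsCentralFixed ρ (star (R i) * S j)) ∧
    (∀ j : Fin n, S j = ∑ i, R i * (star (R i) * S j)) ∧
    (∀ i : Fin m, R i = ∑ j, S j * star (star (R i) * S j)) :=
  special_conjugate_bimodule_unique_general ρ ε d hd m n R S hR0 hS0 hRP hSP hPR hPS hRnorm hRconj
    hSconj hf
end

section
/- Let B be a unital C*-algebra, A ⊆ B a unital C*-subalgebra with {b ∈ B : ab = ba for all a ∈ A} = A ∩ A' =: Z, ρ : A → A a unital *-homomorphism, and ψ_1,…,ψ_n ∈ B with ψ_l·a = ρ(a)·ψ_l for all a ∈ A and Σ_l ψ_l·ψ_l* = 1. Let M := {φ ∈ B : φ·a = ρ(a)·φ for all a ∈ A}. Then: (i) φ*·φ' ∈ Z for all φ, φ' ∈ M; (ii) z·φ·z' ∈ M for all z,z' ∈ Z and φ ∈ M; (iii) every φ ∈ M can be written φ = Σ_l ψ_l·z_l with z_l := ψ_l*·φ ∈ Z, so M = {Σ_l ψ_l·z_l : z_1,…,z_n ∈ Z}. Thus M is a Hilbert Z-bimodule in B inducing ρ. -/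
variable {B : Type*} [NormedRing B] [StarRing B] [CStarRing B] [CompleteSpace B]
  [NormedAlgebra ℂ B] [StarModule ℂ B]

/-- Membership in `Z := A ∩ A'`, the centre of the C*-subalgebra `A` of `B`. -/
def MemCentre (A : StarSubalgebra ℂ B) (z : B) : Prop :=
  z ∈ A ∧ ∀ a ∈ A, z * a = a * z

/-- Membership in `M := {φ ∈ B : φ·a = ρ(a)·φ for all a ∈ A}`. -/
def MemM (A : StarSubalgebra ℂ B) (ρ : A →⋆ₐ[ℂ] A) (φ : B) : Prop :=
  ∀ a : A, φ * (a : B) = (ρ a : B) * φ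

/-!
Everything follows from the intertwining relation `φ a = ρ(a) φ` and its adjoint
`a φ* = φ* ρ(a)`. Together they make `φ* φ'` commute with `A`, so it lies in `Z` by the
hypothesis on the relative commutant, while `Z` commutes with `A` and with `ρ(A) ⊆ A`, so it
may be multiplied onto intertwiners from either side. Finally `Σ ψ_l ψ_l* = 1` expands any
`φ ∈ M` as `Σ ψ_l (ψ_l* φ)` with coefficients `ψ_l* φ ∈ Z`.
-/

theorem eq_sum_mul_mul_of_sum_mul_eq_one {R ι : Type*} [Semiring R] {s : Finset ι}
    {x y : ι → R} (h : ∑ i ∈ s, x i * y i = 1) (r : R) :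
    r = ∑ i ∈ s, x i * (y i * r) := by
  simp only [← mul_assoc, ← Finset.sum_mul, h, one_mul]

namespace MemM

variable {E : Type*} [NormedRing E] [StarRing E] [NormedAlgebra ℂ E] [StarModule ℂ E]
  {A : StarSubalgebra ℂ E} {ρ : A →⋆ₐ[ℂ] A} {φ φ' z : E}

theorem zero : MemM A ρ 0 := fun a => by rw [zero_mul, mul_zero]

theorem add (hφ : MemM A ρ φ) (hφ' : MemM A ρ φ') : MemM A ρ (φ + φ') := fun a => by
  rw [add_mul, mul_add, hφ a, hφ' a]

theorem sum {ι : Type*} {s : Finset ι} {f : ι → E} (hf : ∀ i ∈ s, MemM A ρ (f i)) :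
    MemM A ρ (∑ i ∈ s, f i) :=
  Finset.sum_induction f (MemM A ρ) (fun _ _ => add) zero hf

theorem coe_mul_star (hφ : MemM A ρ φ) (a : A) : (a : E) * star φ = star φ * (ρ a : E) := by
  simpa [map_star] using congrArg star (hφ (star a))

theorem star_mul_commute (hφ : MemM A ρ φ) (hφ' : MemM A ρ φ') (a : A) :
    (a : E) * (star φ * φ') = star φ * φ' * a := by
  rw [← mul_assoc, hφ.coe_mul_star, mul_assoc, ← hφ' a, mul_assoc]

theorem centre_mul (hz : MemCentre A z) (hφ : MemM A ρ φ) : MemM A ρ (z * φ) := fun a => by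
  rw [mul_assoc, hφ a, ← mul_assoc, hz.2 _ (ρ a).2, mul_assoc]

theorem mul_centre (hφ : MemM A ρ φ) (hz : MemCentre A z) : MemM A ρ (φ * z) := fun a => by
  rw [mul_assoc, hz.2 _ a.2, ← mul_assoc, hφ a, mul_assoc]

end MemM

theorem hilbert_bimodule_in_crossed_product_general
    (A : StarSubalgebra ℂ B)
    (hZ : {b : B | ∀ a ∈ A, a * b = b * a} = {b : B | MemCentre A b})
    (ρ : A →⋆ₐ[ℂ] A) (n : ℕ) (ψ : Fin n → B)
    (hψ : ∀ (l : Fin n) (a : A), ψ l * (a : B) = (ρ a : B) * ψ l)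
    (hsum : ∑ l, ψ l * star (ψ l) = 1) :
    (∀ φ φ' : B, MemM A ρ φ → MemM A ρ φ' → MemCentre A (star φ * φ')) ∧
    (∀ z z' φ : B, MemCentre A z → MemCentre A z' → MemM A ρ φ →
      MemM A ρ (z * φ * z')) ∧
    (∀ φ : B, MemM A ρ φ →
      (∀ l : Fin n, MemCentre A (star (ψ l) * φ)) ∧
      φ = ∑ l, ψ l * (star (ψ l) * φ)) ∧
    (∀ φ : B, MemM A ρ φ ↔
      ∃ z : Fin n → B, (∀ l, MemCentre A (z l)) ∧ φ = ∑ l, ψ l * z l) := by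
  have inner_mem : ∀ φ φ' : B, MemM A ρ φ → MemM A ρ φ' → MemCentre A (star φ * φ') :=
    fun φ φ' hφ hφ' => hZ.subset fun a ha => hφ.star_mul_commute hφ' ⟨a, ha⟩
  have expansion : ∀ φ : B, MemM A ρ φ →
      (∀ l : Fin n, MemCentre A (star (ψ l) * φ)) ∧ φ = ∑ l, ψ l * (star (ψ l) * φ) :=
    fun φ hφ => ⟨fun l => inner_mem _ _ (hψ l) hφ, eq_sum_mul_mul_of_sum_mul_eq_one hsum φ⟩
  refine ⟨inner_mem, fun z z' φ hz hz' hφ => (hφ.centre_mul hz).mul_centre hz', expansion,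
    fun φ => ⟨fun hφ => ⟨_, expansion φ hφ⟩, ?_⟩⟩
  rintro ⟨z, hz, rfl⟩
  exact MemM.sum fun l _ => MemM.mul_centre (hψ l) (hz l)

/-- Let `B` be a unital C*-algebra, `A ⊆ B` a unital C*-subalgebra
whose relative commutant in `B` coincides with the centre `Z := A ∩ A'` of `A`,
`ρ : A → A` a unital *-homomorphism, and `ψ_1, …, ψ_n ∈ B` with `ψ_l·a = ρ(a)·ψ_l`
for all `a ∈ A` and `Σ_l ψ_l·ψ_l* = 1`.  Let `M := {φ ∈ B : φ·a = ρ(a)·φ ∀ a ∈ A}`.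
Then: (i) `φ*·φ' ∈ Z` for all `φ, φ' ∈ M`; (ii) `z·φ·z' ∈ M` for all `z, z' ∈ Z` and
`φ ∈ M`; (iii) every `φ ∈ M` can be written `φ = Σ_l ψ_l·z_l` with
`z_l := ψ_l*·φ ∈ Z`, so that `M = {Σ_l ψ_l·z_l : z_1, …, z_n ∈ Z}`.  Thus `M` is a
Hilbert `Z`-bimodule in `B` inducing `ρ`. -/
theorem hilbert_bimodule_in_crossed_product
    (A : StarSubalgebra ℂ B) (hAclosed : IsClosed (A : Set B))
    (hZ : {b : B | ∀ a ∈ A, a * b = b * a} = {b : B | MemCentre A b})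
    (ρ : A →⋆ₐ[ℂ] A) (n : ℕ) (ψ : Fin n → B)
    (hψ : ∀ (l : Fin n) (a : A), ψ l * (a : B) = (ρ a : B) * ψ l)
    (hsum : ∑ l, ψ l * star (ψ l) = 1) :
    (∀ φ φ' : B, MemM A ρ φ → MemM A ρ φ' → MemCentre A (star φ * φ')) ∧
    (∀ z z' φ : B, MemCentre A z → MemCentre A z' → MemM A ρ φ →
      MemM A ρ (z * φ * z')) ∧
    (∀ φ : B, MemM A ρ φ →
      (∀ l : Fin n, MemCentre A (star (ψ l) * φ)) ∧
      φ = ∑ l, ψ l * (star (ψ l) * φ)) ∧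
    (∀ φ : B, MemM A ρ φ ↔
      ∃ z : Fin n → B, (∀ l, MemCentre A (z l)) ∧ φ = ∑ l, ψ l * z l) :=
  hilbert_bimodule_in_crossed_product_general A hZ ρ n ψ hψ hsum
end

section
/- Let B be a unital C*-algebra, A ⊆ B a unital C*-subalgebra with {b ∈ B : ab = ba for all a ∈ A} = A ∩ A' =: Z, ρ : A → A a unital *-homomorphism, and ψ_1,…,ψ_n ∈ B with ψ_l·a = ρ(a)·ψ_l for all a ∈ A and Σ_l ψ_l·ψ_l* = 1. For a multi-index L = (l_1,…,l_s) ∈ {1,…,n}^s write ψ_L := ψ_{l_1}···ψ_{l_s}. Then for all r,s ∈ ℕ and every t ∈ B with t·ρ^r(a) = ρ^s(a)·t for all a ∈ A: each element t_{LM} := ψ_L*·t·ψ_M (with |L| = s, |M| = r) belongs to Z, and t = Σ_{|L|=s, |M|=r} ψ_L·t_{LM}·ψ_M*. -/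
/-!
Since `Σ_l ψ_l ψ_l* = 1`, also `Σ_{|L| = s} ψ_L ψ_L* = 1` for every `s`, and inserting this
resolution of the identity on both sides of `t` gives the expansion. Each `ψ_L` with `|L| = s`
intertwines `a` with `ρ^s(a)`, so `ψ_L* t ψ_M` commutes with `A` whenever `t` intertwines
`ρ^r` with `ρ^s`; it therefore lies in the relative commutant `A' ∩ B`, which is `Z`.
-/

variable {B : Type*} [NormedRing B] [StarRing B] [CStarRing B] [CompleteSpace B]
  [NormedAlgebra ℂ B] [StarModule ℂ B]

/-- The ordered product `ψ_L := ψ_{l_1} ⋯ ψ_{l_s}` associated with a multi-index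
`L = (l_1, …, l_s)`. -/
def psiProd {n : ℕ} (ψ : Fin n → B) {s : ℕ} (L : Fin s → Fin n) : B :=
  (List.ofFn fun i => ψ (L i)).prod

lemma sum_mul_mul_sum_expansion {R ι κ : Type*} [Semiring R] [Fintype ι] [Fintype κ]
    {p p' : ι → R} {q q' : κ → R} (hp : ∑ i, p i * p' i = 1) (hq : ∑ j, q j * q' j = 1)
    (t : R) : t = ∑ i, ∑ j, p i * (p' i * t * q j) * q' j := by
  calc t = (∑ i, p i * p' i) * t * ∑ j, q j * q' j := by rw [hp, hq, one_mul, mul_one]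
    _ = _ := by
      rw [Finset.sum_mul, Finset.sum_mul]
      refine Finset.sum_congr rfl fun i _ => ?_
      simp only [Finset.mul_sum, mul_assoc]

lemma StarAlgHom.iterate_map_star {R A : Type*} [CommSemiring R] [Semiring A] [Algebra R A]
    [Star A] (ρ : A →⋆ₐ[R] A) (s : ℕ) (a : A) : ρ^[s] (star a) = star (ρ^[s] a) :=
  Function.Commute.iterate_left (f := ρ) (g := star) (map_star ρ) s a

section PsiProd

variable {R : Type*} [NormedRing R] {n : ℕ}

lemma psiProd_zero (ψ : Fin n → R) (L : Fin 0 → Fin n) : psiProd ψ L = 1 := by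
  simp [psiProd]

lemma psiProd_succ (ψ : Fin n → R) {s : ℕ} (L : Fin (s + 1) → Fin n) :
    psiProd ψ L = ψ (L 0) * psiProd ψ (Fin.tail L) := by
  simp [psiProd, List.ofFn_succ, Fin.tail]

lemma psiProd_cons (ψ : Fin n → R) {s : ℕ} (l : Fin n) (L : Fin s → Fin n) :
    psiProd ψ (Fin.cons l L : Fin (s + 1) → Fin n) = ψ l * psiProd ψ L := by
  simp [psiProd_succ]

lemma sum_psiProd_mul_star [StarRing R] {ψ : Fin n → R} (hsum : ∑ l, ψ l * star (ψ l) = 1)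
    (s : ℕ) : ∑ L : Fin s → Fin n, psiProd ψ L * star (psiProd ψ L) = 1 := by
  induction s with
  | zero => simp [psiProd_zero]
  | succ s ih =>
    rw [← (Fin.consEquiv fun _ => Fin n).sum_comp, Fintype.sum_prod_type]
    calc ∑ l, ∑ L : Fin s → Fin n, psiProd ψ (Fin.cons l L : Fin (s + 1) → Fin n) *
            star (psiProd ψ (Fin.cons l L : Fin (s + 1) → Fin n))
        = ∑ l, ψ l * (∑ L : Fin s → Fin n, psiProd ψ L * star (psiProd ψ L)) * star (ψ l) := by
          simp only [psiProd_cons, star_mul, Finset.mul_sum, Finset.sum_mul, mul_assoc]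
      _ = 1 := by simp only [ih, mul_one, hsum]

end PsiProd

section Intertwiners

variable {R : Type*} [NormedRing R] [StarRing R] [NormedAlgebra ℂ R] [StarModule ℂ R]
  {A : StarSubalgebra ℂ R} {ρ : A →⋆ₐ[ℂ] A} {n : ℕ} {ψ : Fin n → R}

lemma psiProd_mul_coe (hψ : ∀ l, MemM A ρ (ψ l)) {s : ℕ} (L : Fin s → Fin n) (a : A) :
    psiProd ψ L * (a : R) = ((ρ^[s] a : A) : R) * psiProd ψ L := by
  induction s generalizing a with
  | zero => simp [psiProd_zero]
  | succ s ih =>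
    rw [psiProd_succ, mul_assoc, ih, ← mul_assoc, hψ, Function.iterate_succ_apply', mul_assoc]

lemma coe_mul_star_psiProd (hψ : ∀ l, MemM A ρ (ψ l)) {s : ℕ} (L : Fin s → Fin n) (a : A) :
    (a : R) * star (psiProd ψ L) = star (psiProd ψ L) * ((ρ^[s] a : A) : R) := by
  simpa [StarAlgHom.iterate_map_star] using congrArg star (psiProd_mul_coe hψ L (star a))

lemma coe_commute_star_psiProd_mul_mul (hψ : ∀ l, MemM A ρ (ψ l)) {r s : ℕ} {t : R}
    (ht : ∀ a : A, t * ((ρ^[r] a : A) : R) = ((ρ^[s] a : A) : R) * t)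
    (L : Fin s → Fin n) (M : Fin r → Fin n) (a : A) :
    (a : R) * (star (psiProd ψ L) * t * psiProd ψ M)
      = star (psiProd ψ L) * t * psiProd ψ M * (a : R) := by
  calc (a : R) * (star (psiProd ψ L) * t * psiProd ψ M)
      = star (psiProd ψ L) * (((ρ^[s] a : A) : R) * t) * psiProd ψ M := by
        rw [← mul_assoc, ← mul_assoc, coe_mul_star_psiProd hψ, mul_assoc _ _ t]
    _ = star (psiProd ψ L) * (t * ((ρ^[r] a : A) : R)) * psiProd ψ M := by rw [ht]
    _ = star (psiProd ψ L) * t * psiProd ψ M * (a : R) := by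
        simp only [mul_assoc, psiProd_mul_coe hψ]

end Intertwiners

theorem intertwiner_expansion_general
    (A : StarSubalgebra ℂ B)
    (hZ : {b : B | ∀ a ∈ A, a * b = b * a} = {b : B | MemCentre A b})
    (ρ : A →⋆ₐ[ℂ] A) (n : ℕ) (ψ : Fin n → B)
    (hψ : ∀ (l : Fin n) (a : A), ψ l * (a : B) = (ρ a : B) * ψ l)
    (hsum : ∑ l, ψ l * star (ψ l) = 1) :
    ∀ (r s : ℕ) (t : B), (∀ a : A, t * ((⇑ρ)^[r] a : B) = ((⇑ρ)^[s] a : B) * t) →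
      (∀ (L : Fin s → Fin n) (M : Fin r → Fin n),
        MemCentre A (star (psiProd ψ L) * t * psiProd ψ M)) ∧
      t = ∑ L : Fin s → Fin n, ∑ M : Fin r → Fin n,
            psiProd ψ L * (star (psiProd ψ L) * t * psiProd ψ M) * star (psiProd ψ M) := by
  intro r s t ht
  refine ⟨fun L M => ?_, sum_mul_mul_sum_expansion (sum_psiProd_mul_star hsum s)
    (sum_psiProd_mul_star hsum r) t⟩
  have hcomm : star (psiProd ψ L) * t * psiProd ψ M ∈ {b : B | ∀ a ∈ A, a * b = b * a} :=
    fun a ha => coe_commute_star_psiProd_mul_mul hψ ht L M ⟨a, ha⟩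
  rwa [hZ] at hcomm

/-- Let `B` be a unital C*-algebra, `A ⊆ B` a unital C*-subalgebra
whose relative commutant in `B` coincides with the centre `Z := A ∩ A'` of `A`,
`ρ : A → A` a unital *-homomorphism, and `ψ_1, …, ψ_n ∈ B` with `ψ_l·a = ρ(a)·ψ_l` for
all `a ∈ A` and `Σ_l ψ_l·ψ_l* = 1`.  Then for all `r, s ∈ ℕ` and every `t ∈ B` with
`t·ρ^r(a) = ρ^s(a)·t` for all `a ∈ A`: each element `t_{LM} := ψ_L*·t·ψ_M` (with
`|L| = s`, `|M| = r`) belongs to `Z`, and `t = Σ_{|L|=s, |M|=r} ψ_L·t_{LM}·ψ_M*`. -/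
theorem intertwiner_expansion
    (A : StarSubalgebra ℂ B) (hAclosed : IsClosed (A : Set B))
    (hZ : {b : B | ∀ a ∈ A, a * b = b * a} = {b : B | MemCentre A b})
    (ρ : A →⋆ₐ[ℂ] A) (n : ℕ) (ψ : Fin n → B)
    (hψ : ∀ (l : Fin n) (a : A), ψ l * (a : B) = (ρ a : B) * ψ l)
    (hsum : ∑ l, ψ l * star (ψ l) = 1) :
    ∀ (r s : ℕ) (t : B), (∀ a : A, t * ((⇑ρ)^[r] a : B) = ((⇑ρ)^[s] a : B) * t) →
      (∀ (L : Fin s → Fin n) (M : Fin r → Fin n),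
        MemCentre A (star (psiProd ψ L) * t * psiProd ψ M)) ∧
      t = ∑ L : Fin s → Fin n, ∑ M : Fin r → Fin n,
            psiProd ψ L * (star (psiProd ψ L) * t * psiProd ψ M) * star (psiProd ψ M) :=
  intertwiner_expansion_general A hZ ρ n ψ hψ hsum
end

section
/- Let B be a unital C*-algebra and ψ_1,…,ψ_n ∈ B elements such that every product ψ_l*·ψ_m is central in B and Σ_l ψ_l·ψ_l* = 1. Define θ := Σ_{l,m} ψ_m·ψ_l·ψ_m*·ψ_l*. Then θ is a self-adjoint unitary (θ = θ*, θ² = 1) and θ·ψ_j·ψ_k = ψ_k·ψ_j for all j,k; i.e. θ is the flip operator implementing the permutation symmetry of the canonical shift endomorphism. -/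
/-!
Centrality of `ψ_l* ψ_m` lets each summand of `θ ψ_j ψ_k` be rearranged to
`(ψ_m ψ_m*) ψ_k (ψ_l ψ_l*) ψ_j`, and summing with `Σ_l ψ_l ψ_l* = 1` gives `ψ_k ψ_j`.
Then `θ θ = Σ_{l,m} θ (ψ_m ψ_l) ψ_m* ψ_l* = Σ_{l,m} ψ_l ψ_m ψ_m* ψ_l* = 1`,
and `θ* = θ` is the symmetry of the double sum under `l ↔ m`.
-/

open Finset

section FlipElement

variable {R : Type*} [Semiring R] [StarRing R] {ι : Type*} [Fintype ι]

def flipElement (ψ : ι → R) : R :=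
  ∑ l, ∑ m, ψ m * ψ l * star (ψ m) * star (ψ l)

theorem star_flipElement (ψ : ι → R) : star (flipElement ψ) = flipElement ψ := by
  simp only [flipElement, star_sum, star_mul, star_star, ← mul_assoc]
  exact Finset.sum_comm

variable {ψ : ι → R}

theorem sum_sum_mul_mul_star_mul_star_eq_one (hsum : ∑ l, ψ l * star (ψ l) = 1) :
    ∑ l, ∑ m, ψ l * ψ m * star (ψ m) * star (ψ l) = 1 := by
  calc ∑ l, ∑ m, ψ l * ψ m * star (ψ m) * star (ψ l)
      = ∑ l, ψ l * (∑ m, ψ m * star (ψ m)) * star (ψ l) := by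
        simp only [mul_sum, sum_mul, mul_assoc]
    _ = 1 := by simp only [hsum, mul_one]

theorem flipElement_mul_mul (hcomm : ∀ l m b, Commute (star (ψ l) * ψ m) b)
    (hsum : ∑ l, ψ l * star (ψ l) = 1) (j k : ι) :
    flipElement ψ * (ψ j * ψ k) = ψ k * ψ j := by
  have hterm : ∀ l m, ψ m * ψ l * star (ψ m) * star (ψ l) * (ψ j * ψ k)
      = ψ m * star (ψ m) * ψ k * (ψ l * star (ψ l)) * ψ j := fun l m => by
    calc ψ m * ψ l * star (ψ m) * star (ψ l) * (ψ j * ψ k)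
        = ψ m * ψ l * star (ψ m) * ((star (ψ l) * ψ j) * ψ k) := by simp only [mul_assoc]
      _ = ψ m * ψ l * star (ψ m) * (ψ k * (star (ψ l) * ψ j)) := by rw [(hcomm l j (ψ k)).eq]
      _ = ψ m * (ψ l * (star (ψ m) * ψ k)) * (star (ψ l) * ψ j) := by simp only [mul_assoc]
      _ = ψ m * ((star (ψ m) * ψ k) * ψ l) * (star (ψ l) * ψ j) := by rw [(hcomm m k (ψ l)).eq]
      _ = ψ m * star (ψ m) * ψ k * (ψ l * star (ψ l)) * ψ j := by simp only [mul_assoc]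
  calc flipElement ψ * (ψ j * ψ k)
      = ∑ l, ∑ m, ψ m * star (ψ m) * ψ k * (ψ l * star (ψ l)) * ψ j := by
        simp only [flipElement, sum_mul, hterm]
    _ = (∑ m, ψ m * star (ψ m)) * ψ k * (∑ l, ψ l * star (ψ l)) * ψ j := by
        simp only [sum_mul, mul_sum]
    _ = ψ k * ψ j := by rw [hsum, one_mul, mul_one]

theorem flipElement_mul_self (hcomm : ∀ l m b, Commute (star (ψ l) * ψ m) b)
    (hsum : ∑ l, ψ l * star (ψ l) = 1) : flipElement ψ * flipElement ψ = 1 := by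
  calc flipElement ψ * flipElement ψ
      = ∑ l, ∑ m, flipElement ψ * (ψ m * ψ l) * star (ψ m) * star (ψ l) := by
        simp only [flipElement, mul_sum, mul_assoc]
    _ = 1 := by
        simp only [flipElement_mul_mul hcomm hsum, sum_sum_mul_mul_star_mul_star_eq_one hsum]

end FlipElement

theorem flip_operator_properties_general
    {B : Type*} [NormedRing B] [StarRing B]
    (n : ℕ) (ψ : Fin n → B)
    (hcentral : ∀ (l m : Fin n) (b : B), (star (ψ l) * ψ m) * b = b * (star (ψ l) * ψ m))
    (hsum : ∑ l, ψ l * star (ψ l) = 1)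
    (θ : B) (hθ : θ = ∑ l, ∑ m, ψ m * ψ l * star (ψ m) * star (ψ l)) :
    star θ = θ ∧ θ * θ = 1 ∧ ∀ j k : Fin n, θ * (ψ j * ψ k) = ψ k * ψ j := by
  subst hθ
  exact ⟨star_flipElement ψ, flipElement_mul_self hcentral hsum,
    flipElement_mul_mul hcentral hsum⟩

/-- Let `B` be a unital C*-algebra and `ψ_1, …, ψ_n ∈ B` elements
such that every product `ψ_l*·ψ_m` is central in `B` and `Σ_l ψ_l·ψ_l* = 1` (the
Cuntz–Pimsner-type relations of a module of sections of a vector bundle).  Define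
`θ := Σ_{l,m} ψ_m·ψ_l·ψ_m*·ψ_l*`.  Then `θ` is a self-adjoint unitary (`θ = θ*`,
`θ² = 1`) and `θ·ψ_j·ψ_k = ψ_k·ψ_j` for all `j, k`: `θ` is the flip operator
implementing the permutation symmetry of the canonical shift endomorphism. -/
theorem flip_operator_properties
    {B : Type*} [NormedRing B] [StarRing B] [CStarRing B] [CompleteSpace B]
    [NormedAlgebra ℂ B] [StarModule ℂ B]
    (n : ℕ) (ψ : Fin n → B)
    (hcentral : ∀ (l m : Fin n) (b : B), (star (ψ l) * ψ m) * b = b * (star (ψ l) * ψ m))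
    (hsum : ∑ l, ψ l * star (ψ l) = 1)
    (θ : B) (hθ : θ = ∑ l, ∑ m, ψ m * ψ l * star (ψ m) * star (ψ l)) :
    star θ = θ ∧ θ * θ = 1 ∧ ∀ j k : Fin n, θ * (ψ j * ψ k) = ψ k * ψ j :=
  flip_operator_properties_general n ψ hcentral hsum θ hθ
end
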